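/- Let t ≥ 0, let M = N(d−1)+1, let ω = exp(2πi/M), and for α = 0,1,…,M−1 define |α̂⟩ = Σ_{i=0}^{d−1} t^{i/2} ω^{αi} |i⟩ ∈ ℂ^d. Then (1/M) Σ_{α=0}^{M−1} (|α̂⟩⟨α̂|)^{⊗N} = Σ_{k=0}^{N(d−1)} t^k |R_{N,d;k}⟩⟨R_{N,d;k}|. -/

import Mathlib

open scoped BigOperators ComplexConjugate ComplexOrder Matrix
noncomputable section
open MeasureTheory

namespace DSym

/-- Index set of the computational basis of `(ℂ^d)^{⊗N}`. -/
abbrev Idx (d N : ℕ) := Fin N → Fin d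

/-- `|i| = i_1 + ⋯ + i_N`. -/
def wsum {d N : ℕ} (i : Idx d N) : ℕ := ∑ j, (i j : ℕ)

/-- `C(N,k)_d = #{i ∈ {0,…,d−1}^N : |i| = k}`. -/
def Ccount (d N k : ℕ) : ℕ := (Finset.univ.filter (fun i : Idx d N => wsum i = k)).card

/-- The D-symmetrizator `P_D`. -/
def PD (d N : ℕ) : Matrix (Idx d N) (Idx d N) ℂ :=
  Matrix.of fun i j => if wsum i = wsum j then ((Ccount d N (wsum j) : ℂ))⁻¹ else 0

/-- The symmetrizator `P_S`. -/
def PS (d N : ℕ) : Matrix (Idx d N) (Idx d N) ℂ :=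
  Matrix.of fun i j =>
    ((N.factorial : ℂ))⁻¹ *
      ((Finset.univ.filter (fun σ : Equiv.Perm (Fin N) => i = fun k => j (σ k))).card : ℂ)

/-- The product state `|ξ^1⟩⟨ξ^1| ⊗ ⋯ ⊗ |ξ^N⟩⟨ξ^N|` as a matrix. -/
def prodProj {d N : ℕ} (ξ : Fin N → (Fin d → ℂ)) : Matrix (Idx d N) (Idx d N) ℂ :=
  Matrix.of fun i i' => ∏ j, ξ j (i j) * conj (ξ j (i' j))

/-- Full separability of a multipartite state. -/
def FullySep {d N : ℕ} (ρ : Matrix (Idx d N) (Idx d N) ℂ) : Prop :=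
  ∃ (n : ℕ) (lam : Fin n → ℝ) (ξ : Fin n → Fin N → (Fin d → ℂ)),
    (∀ α, 0 < lam α) ∧ (∀ α j, ∑ x, Complex.normSq (ξ α j x) = 1) ∧
      ρ = ∑ α, (lam α : ℂ) • prodProj (ξ α)

/-- The restricted Dicke vector `|R_{N,d;k}⟩`. -/
def Rvec (d N k : ℕ) : Idx d N → ℂ := fun i => if wsum i = k then 1 else 0

/-- The rank-one operator `|R_{N,d;k}⟩⟨R_{N,d;k}|`. -/
def RProj (d N k : ℕ) : Matrix (Idx d N) (Idx d N) ℂ :=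
  Matrix.vecMulVec (Rvec d N k) (star (Rvec d N k))

/-- Diagonal restricted Dicke state with coefficients `p`. -/
def dickeDiag (d N : ℕ) (p : ℕ → ℝ) : Matrix (Idx d N) (Idx d N) ℂ :=
  ∑ k ∈ Finset.range (N * (d - 1) + 1), (p k : ℂ) • RProj d N k

/-- Partial transposition of the first `m` tensor factors (entrywise). -/
def Gamma {d N : ℕ} (m : ℕ) (ρ : Matrix (Idx d N) (Idx d N) ℂ) :
    Matrix (Idx d N) (Idx d N) ℂ :=
  Matrix.of fun i j =>
    ρ (fun k => if (k : ℕ) < m then j k else i k) (fun k => if (k : ℕ) < m then i k else j k)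

/-- D-symmetry of a state: `ρ = P_D ρ P_D`. -/
def IsDSymm {d N : ℕ} (ρ : Matrix (Idx d N) (Idx d N) ℂ) : Prop :=
  ρ = PD d N * ρ * PD d N

/-- A pure fully separable D-symmetric state `σ = (|ξ⟩⟨ξ|)^{⊗N}`, `ξ` a unit vector. -/
def PureDSymmProd {d N : ℕ} (σ : Matrix (Idx d N) (Idx d N) ℂ) : Prop :=
  ∃ ξ : Fin d → ℂ,
    (∑ x, Complex.normSq (ξ x) = 1) ∧ σ = prodProj (fun _ : Fin N => ξ) ∧ IsDSymm σ

/-- Entanglement witness for the D-symmetric system. -/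
def IsDWitness {d N : ℕ} (W : Matrix (Idx d N) (Idx d N) ℂ) : Prop :=
  W.IsHermitian ∧ W = PD d N * W * PD d N ∧
    ∀ σ : Matrix (Idx d N) (Idx d N) ℂ, PureDSymmProd σ → 0 ≤ (W * σ).trace

/-- The dual restricted Dicke vector. -/
def Rtilde (d N k : ℕ) : Idx d N → ℂ := ((Ccount d N k : ℂ))⁻¹ • Rvec d N k

/-- Solution of the generalized moment problem on `[0,∞)`. -/
def IsGenMomentSolution (n : ℕ) (p : ℕ → ℝ) : Prop :=
  ∃ (σ : Measure ℝ) (M : ℝ), IsFiniteMeasure σ ∧ σ {x | x < 0} = 0 ∧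
    (∀ k ≤ n, Integrable (fun t => t ^ k) σ) ∧ 0 ≤ M ∧
    (∀ k < n, p k = ∫ t, t ^ k ∂σ) ∧ p n = (∫ t, t ^ n ∂σ) + M

/-- Solution of the strict moment problem on `[0,∞)`. -/
def IsStrictMomentSolution (n : ℕ) (p : ℕ → ℝ) : Prop :=
  ∃ σ : Measure ℝ, IsFiniteMeasure σ ∧ σ {x | x < 0} = 0 ∧
    (∀ k ≤ n, Integrable (fun t => t ^ k) σ) ∧ (∀ k ≤ n, p k = ∫ t, t ^ k ∂σ)


/-- The normalization constant `C_z = (Σ_{i=0}^{d−1} |z|^{2i})^{−1/2}`. -/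
def Cz (d : ℕ) (z : ℂ) : ℝ := (∑ j ∈ Finset.range d, ‖z‖ ^ (2 * j)) ^ (-(1/2 : ℝ))

/-- The vector `ζ_z = C_z Σ_{i=0}^{d−1} z^i |i⟩`. -/
def zeta (d : ℕ) (z : ℂ) : Fin d → ℂ := fun i => (Cz d z : ℂ) * z ^ (i : ℕ)

/-- The basis vector `|d−1⟩`. -/
def topVec (d : ℕ) : Fin d → ℂ := fun x => if (x : ℕ) = d - 1 then 1 else 0

/-- Sum of the first `m` coordinates of a tuple. -/
def wsumFirst {d N : ℕ} (m : ℕ) (i : Idx d N) : ℕ :=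
  ∑ j ∈ Finset.univ.filter (fun j : Fin N => (j : ℕ) < m), (i j : ℕ)

/-- Sum of the last `N − m` coordinates of a tuple. -/
def wsumLast {d N : ℕ} (m : ℕ) (i : Idx d N) : ℕ :=
  ∑ j ∈ Finset.univ.filter (fun j : Fin N => m ≤ (j : ℕ)), (i j : ℕ)

/-- The vector `|R_{m,d;a}⟩ ⊗ |R_{N−m,d;b}⟩`, viewed inside `(ℂ^d)^{⊗N}`. -/
def splitVec (d N m : ℕ) (a b : ℤ) : Idx d N → ℂ :=
  fun i => if (wsumFirst m i : ℤ) = a ∧ (wsumLast m i : ℤ) = b then 1 else 0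

/-- The operator `A_s` from the decomposition of `Γ_m(ρ)`. -/
def Amat (d N m : ℕ) (p : ℕ → ℝ) (s : ℤ) : Matrix (Idx d N) (Idx d N) ℂ :=
  ∑ k ∈ Finset.Icc (max 0 (-s)) (min ((m : ℤ) * ((d : ℤ) - 1)) ((((N : ℤ) - (m : ℤ)) * ((d : ℤ) - 1)) - s)),
  ∑ l ∈ Finset.Icc (max 0 (-s)) (min ((m : ℤ) * ((d : ℤ) - 1)) ((((N : ℤ) - (m : ℤ)) * ((d : ℤ) - 1)) - s)),
    (p (k + l + s).toNat : ℂ) •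
      Matrix.vecMulVec (splitVec d N m k (k + s)) (star (splitVec d N m l (l + s)))

/-- The permutation unitary `F_σ`, `F_σ|ξ_1,…,ξ_N⟩ = |ξ_{σ⁻¹(1)},…,ξ_{σ⁻¹(N)}⟩`. -/
def Fmat (d N : ℕ) (σ : Equiv.Perm (Fin N)) : Matrix (Idx d N) (Idx d N) ℂ :=
  Matrix.of fun x i => if x = fun k => i (σ.symm k) then 1 else 0

/-- Partial transposition with respect to the binary string `b`. -/
def partialT {d N : ℕ} (b : Fin N → Bool) (ρ : Matrix (Idx d N) (Idx d N) ℂ) :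
    Matrix (Idx d N) (Idx d N) ℂ :=
  Matrix.of fun i j => ρ (fun k => if b k then j k else i k) (fun k => if b k then i k else j k)

end DSym
end

/-!
Every `|α̂⟩` is the geometric vector `(√t ω^α)^i`, so the `(i, i')` entry of its `N`-th tensor
power is `√t^(|i| + |i'|) (ω^(|i| - |i'|))^α`. Since `0 ≤ |i|, |i'| < M`, averaging over the
`M`-th roots of unity keeps exactly the entries with `|i| = |i'|`, where it gives `t^|i|`; these
are the entries of `Σ_k t^k |R_{N,d;k}⟩⟨R_{N,d;k}|`.
-/

open Finset

theorem IsPrimitiveRoot.sum_pow_mul_inv_pow {K : Type*} [Field K] {ζ : K} {M : ℕ}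
    (hζ : IsPrimitiveRoot ζ M) {a b : ℕ} (ha : a < M) (hb : b < M) :
    ∑ α ∈ range M, (ζ ^ a * ζ⁻¹ ^ b) ^ α = if a = b then (M : K) else 0 := by
  have hζ0 : ζ ≠ 0 := hζ.ne_zero (by omega)
  split_ifs with hab
  · subst hab
    simp [hζ0]
  · have hne : ζ ^ a * ζ⁻¹ ^ b ≠ 1 := by
      rw [inv_pow, ← div_eq_mul_inv, Ne, div_eq_one_iff_eq (pow_ne_zero _ hζ0)]
      exact fun h => hab (hζ.pow_inj ha hb h)
    have hM : (ζ ^ a * ζ⁻¹ ^ b) ^ M = 1 := by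
      rw [mul_pow, ← pow_mul, ← pow_mul, mul_comm a, mul_comm b, pow_mul, pow_mul, inv_pow,
        hζ.pow_eq_one, one_pow, inv_one, one_pow, one_mul]
    rw [geom_sum_eq hne, hM, sub_self, zero_div]

namespace DSym

theorem wsum_le {d N : ℕ} (i : Idx d N) : wsum i ≤ N * (d - 1) :=
  calc ∑ j, (i j : ℕ) ≤ ∑ _j : Fin N, (d - 1) :=
        sum_le_sum fun j _ => by have := (i j).isLt; omega
    _ = N * (d - 1) := by simp

theorem prodProj_const_geom_apply {d N : ℕ} (w : ℂ) (i i' : Idx d N) :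
    prodProj (fun _ : Fin N => fun x : Fin d => w ^ (x : ℕ)) i i'
      = w ^ wsum i * (starRingEnd ℂ) w ^ wsum i' := by
  simp [prodProj, wsum, prod_mul_distrib, prod_pow_eq_pow_sum]

theorem sum_smul_RProj_apply {d N : ℕ} (f : ℕ → ℂ) (i i' : Idx d N) :
    (∑ k ∈ range (N * (d - 1) + 1), f k • RProj d N k) i i'
      = if wsum i = wsum i' then f (wsum i) else 0 := by
  have hi : wsum i ∈ range (N * (d - 1) + 1) := mem_range.2 (Nat.lt_succ_of_le (wsum_le i))
  simp only [Matrix.sum_apply, Matrix.smul_apply, RProj, Matrix.vecMulVec_apply, Pi.star_apply,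
    Rvec, smul_eq_mul]
  rw [sum_eq_single_of_mem _ hi fun k _ hk => by simp [Ne.symm hk]]
  by_cases h : wsum i = wsum i' <;> simp [h, eq_comm]

theorem stmt13_general (d N : ℕ) (t : ℝ) (ht : 0 ≤ t)
    (M : ℕ) (hM : M = N * (d - 1) + 1)
    (ω : ℂ) (hω : ω = Complex.exp (2 * Real.pi * Complex.I / M))
    (vhat : ℕ → Fin d → ℂ)
    (hv : ∀ (α : ℕ) (i : Fin d), vhat α i = (Real.sqrt t : ℂ) ^ (i : ℕ) * ω ^ (α * (i : ℕ))) :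
    (M : ℂ)⁻¹ • ∑ α ∈ Finset.range M, prodProj (fun _ : Fin N => vhat α)
      = ∑ k ∈ Finset.range (N * (d - 1) + 1), (t : ℂ) ^ k • RProj d N k := by
  have hM0 : M ≠ 0 := by omega
  have hprim : IsPrimitiveRoot ω M := hω ▸ Complex.isPrimitiveRoot_exp M hM0
  have hconj : (starRingEnd ℂ) ω = ω⁻¹ := (Complex.inv_eq_conj (hprim.norm'_eq_one hM0)).symm
  have hvhat : ∀ α, vhat α = fun x : Fin d => ((Real.sqrt t : ℂ) * ω ^ α) ^ (x : ℕ) := fun α =>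
    funext fun x => by rw [hv, mul_pow, pow_mul]
  have hsqrt : (Real.sqrt t : ℂ) ^ 2 = t := by exact_mod_cast Real.sq_sqrt ht
  ext i i'
  have ha : wsum i < M := hM ▸ Nat.lt_succ_of_le (wsum_le i)
  have hb : wsum i' < M := hM ▸ Nat.lt_succ_of_le (wsum_le i')
  have hentry : ∀ α, prodProj (fun _ : Fin N => vhat α) i i'
      = (Real.sqrt t : ℂ) ^ (wsum i + wsum i') * (ω ^ wsum i * ω⁻¹ ^ wsum i') ^ α := fun α => by
    rw [hvhat, prodProj_const_geom_apply, map_mul, map_pow, hconj, Complex.conj_ofReal]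
    ring
  rw [sum_smul_RProj_apply, Matrix.smul_apply, Matrix.sum_apply]
  simp only [hentry, ← mul_sum, hprim.sum_pow_mul_inv_pow ha hb, smul_eq_mul]
  split_ifs with hab
  · rw [← hab, ← two_mul, pow_mul, hsqrt]
    field_simp
  · simp

theorem stmt13 (d N : ℕ) (hd : 2 ≤ d) (hN : 2 ≤ N) (t : ℝ) (ht : 0 ≤ t)
    (M : ℕ) (hM : M = N * (d - 1) + 1)
    (ω : ℂ) (hω : ω = Complex.exp (2 * Real.pi * Complex.I / M))
    (vhat : ℕ → Fin d → ℂ)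
    (hv : ∀ (α : ℕ) (i : Fin d), vhat α i = (Real.sqrt t : ℂ) ^ (i : ℕ) * ω ^ (α * (i : ℕ))) :
    (M : ℂ)⁻¹ • ∑ α ∈ Finset.range M, prodProj (fun _ : Fin N => vhat α)
      = ∑ k ∈ Finset.range (N * (d - 1) + 1), (t : ℂ) ^ k • RProj d N k :=
  stmt13_general d N t ht M hM ω hω vhat hv

end DSym
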